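/- arXiv:2504.21690 — 9 statements merged into one kernel-verified Lean document; each statement's English description precedes it below -/
import Mathlib

section
/- Let X be a set with maps σ_a, τ_b : X → X for each a, b ∈ X satisfying σ_{σ_a(b)}(σ_{τ_b(a)}(c)) = σ_a(σ_b(c)) for all a, b, c ∈ X, with each σ_a bijective. Define on the free vector space C^n with basis {e_x : x ∈ X} the matrices R = Σ_{a,b∈X} e_{b,σ_a(b)} ⊗ e_{a,τ_b(a)} where additionally τ_b(a) = σ_{σ_a(b)}^{-1}(a) for all a, b. Then R satisfies the Yang–Baxter equation R₁₂R₁₃R₂₃ = R₂₃R₁₃R₁₂ on C^n ⊗ C^n ⊗ C^n. -/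
/-!
Row `(b, a)` of `R` has a single `1`, in column `r (b, a) = (σ_a b, τ_b a)`. Such `0/1` matrices
of maps multiply contravariantly, `M_f M_g = M_{g ∘ f}`, and `R₁₂, R₁₃, R₂₃` are the matrices of
`r` acting on the corresponding two factors of `X³`. So the Yang–Baxter equation reduces to the
set-theoretic braid relation `r₂₃ ∘ r₁₃ ∘ r₁₂ = r₁₂ ∘ r₁₃ ∘ r₂₃`. Its first component is the
compatibility condition; the other two follow from it because `τ_b a` is the unique `t` with
`σ_{σ_a b} t = a`, the `σ_a` being injective.
-/

open Matrix Kronecker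

section FunctionMatrix

variable {ι S : Type*} [DecidableEq ι]

lemma one_submatrix_id_apply [Zero S] [One S] (f : ι → ι) (p q : ι) :
    (1 : Matrix ι ι S).submatrix f id p q = if f p = q then 1 else 0 :=
  one_apply

lemma one_submatrix_id_mul [Fintype ι] [NonAssocSemiring S] (f : ι → ι) (M : Matrix ι ι S) :
    (1 : Matrix ι ι S).submatrix f id * M = M.submatrix f id := by
  ext p q
  simp [mul_apply, one_apply]

lemma one_submatrix_id_mul_one_submatrix_id [Fintype ι] [NonAssocSemiring S] (f g : ι → ι) :
    (1 : Matrix ι ι S).submatrix f id * (1 : Matrix ι ι S).submatrix g id =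
      (1 : Matrix ι ι S).submatrix (g ∘ f) id := by
  rw [one_submatrix_id_mul, submatrix_submatrix, Function.id_comp]

lemma sum_single_eq_one_submatrix_id [Fintype ι] [AddCommMonoid S] [One S] (f : ι → ι) :
    ∑ p, single p (f p) (1 : S) = (1 : Matrix ι ι S).submatrix f id := by
  ext p q
  simp [Matrix.sum_apply, single_apply, one_apply, ite_and]

end FunctionMatrix

section Legs

variable {α : Type*} (r : α × α → α × α)

def leg12 (p : α × α × α) : α × α × α := ((r (p.1, p.2.1)).1, (r (p.1, p.2.1)).2, p.2.2)

def leg13 (p : α × α × α) : α × α × α := ((r (p.1, p.2.2)).1, p.2.1, (r (p.1, p.2.2)).2)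

def leg23 (p : α × α × α) : α × α × α := (p.1, (r (p.2.1, p.2.2)).1, (r (p.2.1, p.2.2)).2)

variable {S : Type*} [DecidableEq α] [MulZeroOneClass S]

lemma eq_one_submatrix_leg12 (R12 : Matrix (α × α × α) (α × α × α) S)
    (h : ∀ p q, R12 p q =
      (1 : Matrix (α × α) (α × α) S).submatrix r id (p.1, p.2.1) (q.1, q.2.1) *
        if p.2.2 = q.2.2 then 1 else 0) :
    R12 = (1 : Matrix _ _ S).submatrix (leg12 r) id := by
  ext p q
  rw [h, one_submatrix_id_apply, one_submatrix_id_apply, ite_zero_mul_ite_zero, mul_one]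
  exact if_congr (by simp only [leg12, Prod.ext_iff]; tauto) rfl rfl

lemma eq_one_submatrix_leg13 (R13 : Matrix (α × α × α) (α × α × α) S)
    (h : ∀ p q, R13 p q =
      (1 : Matrix (α × α) (α × α) S).submatrix r id (p.1, p.2.2) (q.1, q.2.2) *
        if p.2.1 = q.2.1 then 1 else 0) :
    R13 = (1 : Matrix _ _ S).submatrix (leg13 r) id := by
  ext p q
  rw [h, one_submatrix_id_apply, one_submatrix_id_apply, ite_zero_mul_ite_zero, mul_one]
  exact if_congr (by simp only [leg13, Prod.ext_iff]; tauto) rfl rfl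

lemma eq_one_submatrix_leg23 (R23 : Matrix (α × α × α) (α × α × α) S)
    (h : ∀ p q, R23 p q =
      (1 : Matrix (α × α) (α × α) S).submatrix r id (p.2.1, p.2.2) (q.2.1, q.2.2) *
        if p.1 = q.1 then 1 else 0) :
    R23 = (1 : Matrix _ _ S).submatrix (leg23 r) id := by
  ext p q
  rw [h, one_submatrix_id_apply, one_submatrix_id_apply, ite_zero_mul_ite_zero, mul_one]
  exact if_congr (by simp only [leg23, Prod.ext_iff]; tauto) rfl rfl

end Legs

section BraidMap

variable {X : Type*} {σ τ : X → X → X}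

def braidMap (σ τ : X → X → X) (p : X × X) : X × X := (σ p.2 p.1, τ p.1 p.2)

lemma sum_single_kronecker_single_eq_one_submatrix_braidMap [Fintype X] [DecidableEq X]
    {S : Type*} [NonAssocSemiring S] :
    ∑ a : X, ∑ b : X, single b (σ a b) (1 : S) ⊗ₖ single a (τ b a) (1 : S) =
      (1 : Matrix (X × X) (X × X) S).submatrix (braidMap σ τ) id := by
  rw [← sum_single_eq_one_submatrix_id, Fintype.sum_prod_type_right]
  simp only [single_kronecker_single, mul_one, braidMap]

lemma eq_tau_of_sigma_sigma_eq (hσ : ∀ a, Function.Injective (σ a))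
    (hτ : ∀ a b, σ (σ a b) (τ b a) = a) {a b t : X} (h : σ (σ a b) t = a) : t = τ b a :=
  hσ _ (h.trans (hτ a b).symm)

lemma sigma_tau_braid (hσ : ∀ a, Function.Injective (σ a)) (hτ : ∀ a b, σ (σ a b) (τ b a) = a)
    (hcompat : ∀ a b c, σ (σ a b) (σ (τ b a) c) = σ a (σ b c)) (x y z : X) :
    σ (τ (σ y x) z) (τ x y) = τ (σ (τ y z) x) (σ z y) := by
  apply eq_tau_of_sigma_sigma_eq hσ hτ
  rw [hcompat z y x, hcompat z (σ y x) (τ x y), hτ y x]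

lemma tau_tau_braid (hσ : ∀ a, Function.Injective (σ a)) (hτ : ∀ a b, σ (σ a b) (τ b a) = a)
    (hcompat : ∀ a b c, σ (σ a b) (σ (τ b a) c) = σ a (σ b c)) (x y z : X) :
    τ (τ x y) (τ (σ y x) z) = τ x (τ y z) := by
  refine (eq_tau_of_sigma_sigma_eq hσ hτ ?_).symm
  rw [sigma_tau_braid hσ hτ hcompat]
  apply hσ (σ z (σ y x))
  rw [hτ z (σ y x), ← hcompat z y x, hcompat (σ z y) (σ (τ y z) x) (τ x (τ y z)), hτ (τ y z) x,
    hτ z y]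

theorem braidMap_braid (hσ : ∀ a, Function.Injective (σ a))
    (hτ : ∀ a b, σ (σ a b) (τ b a) = a)
    (hcompat : ∀ a b c, σ (σ a b) (σ (τ b a) c) = σ a (σ b c)) :
    leg23 (braidMap σ τ) ∘ leg13 (braidMap σ τ) ∘ leg12 (braidMap σ τ) =
      leg12 (braidMap σ τ) ∘ leg13 (braidMap σ τ) ∘ leg23 (braidMap σ τ) := by
  funext ⟨x, y, z⟩
  simp only [Function.comp_apply, leg12, leg13, leg23, braidMap, Prod.mk.injEq]
  exact ⟨(hcompat z y x).symm, sigma_tau_braid hσ hτ hcompat x y z,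
    tau_tau_braid hσ hτ hcompat x y z⟩

end BraidMap

/-- the combinatorial matrix `R = Σ_{a,b} e_{b,σ_a(b)} ⊗ e_{a,τ_b(a)}`
satisfies the Yang–Baxter equation on `ℂ^n ⊗ ℂ^n ⊗ ℂ^n`. -/
theorem stmt0 {X : Type*} [Fintype X] [DecidableEq X]
    (σ τ : X → X → X)
    (hbij : ∀ a, Function.Bijective (σ a))
    (hτ : ∀ a b, σ (σ a b) (τ b a) = a)
    (hcompat : ∀ a b c, σ (σ a b) (σ (τ b a) c) = σ a (σ b c))
    (R : Matrix (X × X) (X × X) ℂ)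
    (hR : R = ∑ a : X, ∑ b : X,
      Matrix.single b (σ a b) (1 : ℂ) ⊗ₖ Matrix.single a (τ b a) (1 : ℂ))
    (R12 R13 R23 : Matrix (X × X × X) (X × X × X) ℂ)
    (hR12 : ∀ p q, R12 p q = R (p.1, p.2.1) (q.1, q.2.1) * (if p.2.2 = q.2.2 then 1 else 0))
    (hR13 : ∀ p q, R13 p q = R (p.1, p.2.2) (q.1, q.2.2) * (if p.2.1 = q.2.1 then 1 else 0))
    (hR23 : ∀ p q, R23 p q = R (p.2.1, p.2.2) (q.2.1, q.2.2) * (if p.1 = q.1 then 1 else 0)) :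
    R12 * R13 * R23 = R23 * R13 * R12 := by
  rw [sum_single_kronecker_single_eq_one_submatrix_braidMap] at hR
  subst hR
  rw [eq_one_submatrix_leg12 _ R12 hR12, eq_one_submatrix_leg13 _ R13 hR13,
    eq_one_submatrix_leg23 _ R23 hR23]
  simp only [one_submatrix_id_mul_one_submatrix_id]
  rw [braidMap_braid (fun a => (hbij a).injective) hτ hcompat]
end

section
/- Let (X, +, 0) be a group, σ_a : X → X bijective additive maps (σ_a(b+c) = σ_a(b) + σ_a(c)), and define a ∘ b := a + σ_a(b). If (X, ∘) is a semigroup (i.e. ∘ is associative), then σ_a(σ_b(c)) = σ_{a∘b}(c) for all a, b, c ∈ X. -/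
def circ {X : Type*} [AddGroup X] (σ : X → X → X) (a b : X) : X := a + σ a b

theorem stmt2_general {X : Type*} [AddGroup X] (σ : X → X → X)
    (hadd : ∀ x a b : X, σ x (a + b) = σ x a + σ x b)
    (hassoc : ∀ a b c : X, circ σ (circ σ a b) c = circ σ a (circ σ b c)) :
    ∀ a b c : X, σ a (σ b c) = σ (circ σ a b) c := by
  intro a b c
  have key : a + σ a b + σ (circ σ a b) c = a + σ a b + σ a (σ b c) := by
    simpa only [circ, hadd, add_assoc] using hassoc a b c
  exact (add_left_cancel key).symm

/-- if `∘` is associative then `σ_a(σ_b(c)) = σ_{a∘b}(c)`. -/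
theorem stmt2 {X : Type*} [AddGroup X] (σ : X → X → X)
    (hbij : ∀ a, Function.Bijective (σ a))
    (hadd : ∀ x a b : X, σ x (a + b) = σ x a + σ x b)
    (hassoc : ∀ a b c : X, circ σ (circ σ a b) c = circ σ a (circ σ b c)) :
    ∀ a b c : X, σ a (σ b c) = σ (circ σ a b) c :=
  stmt2_general σ hadd hassoc
end

section
/- Let (X, +, 0) be a group, σ_a : X → X bijective additive maps, and a ∘ b := a + σ_a(b). If ∘ is associative, then (X, ∘, 0) is a group, with 0 serving as the two-sided identity and a^{-1} := σ_a^{-1}(-a) as the two-sided inverse of a. -/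
theorem left_identity_and_inverse_of_right {M : Type*} (op : M → M → M) (e : M) (inv : M → M)
    (assoc : ∀ a b c, op (op a b) c = op a (op b c)) (op_e : ∀ a, op a e = a)
    (op_inv : ∀ a, op a (inv a) = e) :
    (∀ a, op e a = a) ∧ ∀ a, op (inv a) a = e := by
  let : Mul M := ⟨op⟩
  let : One M := ⟨e⟩
  let : Inv M := ⟨inv⟩
  let : Group M := Group.ofRightAxioms assoc op_e op_inv
  exact ⟨one_mul, inv_mul_cancel⟩

theorem circ_zero {X : Type*} [AddGroup X] {σ : X → X → X}
    (hadd : ∀ x a b : X, σ x (a + b) = σ x a + σ x b) (a : X) : circ σ a 0 = a := by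
  have σ_zero : σ a 0 = 0 := (AddMonoidHom.mk' (σ a) (hadd a)).map_zero
  rw [circ, σ_zero, add_zero]

theorem circ_rightInverse {X : Type*} [AddGroup X] {σ σinv : X → X → X} {a : X}
    (hinv : Function.RightInverse (σinv a) (σ a)) : circ σ a (σinv a (-a)) = 0 := by
  rw [circ, hinv, add_neg_cancel]

theorem stmt3_general {X : Type*} [AddGroup X] (σ σinv : X → X → X)
    (hinv : ∀ a, Function.LeftInverse (σinv a) (σ a) ∧ Function.RightInverse (σinv a) (σ a))
    (hadd : ∀ x a b : X, σ x (a + b) = σ x a + σ x b)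
    (hassoc : ∀ a b c : X, circ σ (circ σ a b) c = circ σ a (circ σ b c)) :
    (∀ a : X, circ σ a 0 = a) ∧ (∀ a : X, circ σ 0 a = a) ∧
    (∀ a : X, circ σ a (σinv a (-a)) = 0) ∧ (∀ a : X, circ σ (σinv a (-a)) a = 0) := by
  have right_id : ∀ a, circ σ a 0 = a := circ_zero hadd
  have right_inv : ∀ a, circ σ a (σinv a (-a)) = 0 := fun a => circ_rightInverse (hinv a).2
  obtain ⟨left_id, left_inv⟩ :=
    left_identity_and_inverse_of_right (circ σ) 0 (fun a => σinv a (-a)) hassoc right_id right_inv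
  exact ⟨right_id, left_id, right_inv, left_inv⟩

/-- if `∘` is associative then `(X, ∘, 0)` is a group, with `0` a two-sided
identity and `a⁻¹ := σ_a⁻¹(-a)` a two-sided inverse. -/
theorem stmt3 {X : Type*} [AddGroup X] (σ σinv : X → X → X)
    (hbij : ∀ a, Function.Bijective (σ a))
    (hinv : ∀ a, Function.LeftInverse (σinv a) (σ a) ∧ Function.RightInverse (σinv a) (σ a))
    (hadd : ∀ x a b : X, σ x (a + b) = σ x a + σ x b)
    (hassoc : ∀ a b c : X, circ σ (circ σ a b) c = circ σ a (circ σ b c)) :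
    (∀ a : X, circ σ a 0 = a) ∧ (∀ a : X, circ σ 0 a = a) ∧
    (∀ a : X, circ σ a (σinv a (-a)) = 0) ∧ (∀ a : X, circ σ (σinv a (-a)) a = 0) :=
  stmt3_general σ σinv hinv hadd hassoc
end

section
/- Let (X,+,∘) be a left brace (i.e. (X,+) abelian), σ_a(b) := -a + a∘b, τ_b(a) := σ_{σ_a(b)}^{-1}(a). Fix a, b ∈ X, and let a₁, a₂ ∈ X with a₁ ∘ a₂ = a. Set c := σ_{σ_a(b)}^{-1}(a₁). Then τ_c(σ_a(b)) = σ_{a₂}(b). -/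
/-- A left brace: an abelian group `(X,+,0)` and a group `(X,*,1)`
satisfying `a * (b + c) = a * b - a + a * c`. -/
class LeftBrace (X : Type*) extends AddCommGroup X, Group X where
  brace : ∀ a b c : X, a * (b + c) = a * b + -a + a * c

/-- `σ_a(b) := -a + a ∘ b`. -/
def sig {X : Type*} [LeftBrace X] (a b : X) : X := -a + a * b

/-- The inverse map `σ_a⁻¹(b) = a⁻¹ ∘ (a + b)`. -/
def sigInv {X : Type*} [LeftBrace X] (a b : X) : X := a⁻¹ * (a + b)

/-- `τ_b(a) := σ_{σ_a(b)}⁻¹(a)`. -/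
def tau {X : Type*} [LeftBrace X] (b a : X) : X := sigInv (sig a b) a

/-!
`σ : (X, ∘) → Aut(X, +)` is a group homomorphism. Hence, with `x := σ_a(b)`, the element `c`
satisfies `σ_x(c) = a₁`, so `τ_c(x) = σ_{a₁}⁻¹(x) = σ_{a₁}⁻¹(σ_{a₁}(σ_{a₂}(b))) = σ_{a₂}(b)`.
-/

section LeftBrace

variable {X : Type*} [LeftBrace X]

theorem sig_add (a b c : X) : sig a (b + c) = sig a b + sig a c := by
  unfold sig
  rw [LeftBrace.brace]
  abel

def sigAddHom (a : X) : X →+ X := AddMonoidHom.mk' (sig a) (sig_add a)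

theorem sig_neg (a b : X) : sig a (-b) = -sig a b :=
  map_neg (sigAddHom a) b

theorem sig_mul (a b c : X) : sig (a * b) c = sig a (sig b c) := by
  calc sig (a * b) c = -sig a b + sig a (b * c) := by
        simp only [sig, mul_assoc]
        abel
    _ = sig a (-b + b * c) := by rw [sig_add, sig_neg]
    _ = sig a (sig b c) := rfl

theorem sig_sigInv (a x : X) : sig a (sigInv a x) = x := by
  rw [sig, sigInv, mul_inv_cancel_left, neg_add_cancel_left]

theorem sigInv_sig (a x : X) : sigInv a (sig a x) = x := by
  rw [sig, sigInv, add_neg_cancel_left, inv_mul_cancel_left]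

end LeftBrace

/-- in a left brace, if `a₁ ∘ a₂ = a` and `c := σ_{σ_a(b)}⁻¹(a₁)`,
then `τ_c(σ_a(b)) = σ_{a₂}(b)`. -/
theorem stmt12 {X : Type*} [LeftBrace X] (a b a₁ a₂ : X) (ha : a₁ * a₂ = a)
    (c : X) (hc : c = sigInv (sig a b) a₁) :
    tau c (sig a b) = sig a₂ b := by
  have hσc : sig (sig a b) c = a₁ := by rw [hc, sig_sigInv]
  calc tau c (sig a b) = sigInv a₁ (sig a b) := by rw [tau, hσc]
    _ = sigInv a₁ (sig a₁ (sig a₂ b)) := by rw [← ha, sig_mul]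
    _ = sig a₂ b := sigInv_sig a₁ _
end

section
/- Let X be a finite set with bijections σ_a : X → X satisfying σ_a(σ_b(c)) = σ_{σ_a(b)}(σ_{τ_b(a)}(c)) for all a,b,c, where τ_b(a) := σ_{σ_a(b)}^{-1}(a). On C^n ⊗ C^n (n = |X|) define F := Σ_{a,b∈X} e_{a,a} ⊗ e_{b,σ_a(b)} and R := F^{op} F^{-1} where F^{op} = P F P (P the flip). Then R = Σ_{a,b∈X} e_{b,σ_a(b)} ⊗ e_{a,τ_b(a)} and R₁₂ R₂₁ = Id, where R₂₁ = P R P. -/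
/-!
`F`, `P` and `F⁻¹` are permutation matrices: of the shear `(a, b) ↦ (a, σ_a b)` of `X × X`, of the
swap, and of the inverse shear. Hence `R = P F P F⁻¹` is the permutation matrix of the composite
bijection, which sends `(b, a)` to `(σ_a b, σ_{σ_a b}⁻¹ a) = (σ_a b, τ_b a)`. Unitarity
`R₁₂ R₂₁ = 1` is formal: `(P F P F⁻¹) (P (P F P F⁻¹) P) = 1` in any monoid once `P² = 1`.
-/

open Matrix Kronecker

theorem Equiv.toPEquiv_toMatrix_eq_sum_single {ι α : Type*} [Fintype ι] [DecidableEq ι]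
    [AddCommMonoid α] [One α] (e : ι ≃ ι) :
    e.toPEquiv.toMatrix = ∑ i, single i (e i) (1 : α) := by
  ext i j
  simp [PEquiv.toMatrix_apply, Matrix.sum_apply, single_apply, ite_and]

theorem Equiv.toPEquiv_toMatrix_eq_sum_kronecker {ι α : Type*} [Fintype ι] [DecidableEq ι]
    [Semiring α] (e : ι × ι ≃ ι × ι) :
    e.toPEquiv.toMatrix =
      ∑ a, ∑ b, single a (e (a, b)).1 (1 : α) ⊗ₖ single b (e (a, b)).2 (1 : α) := by
  simp only [single_kronecker_single, mul_one, Prod.mk.eta]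
  rw [← Fintype.sum_prod_type', Equiv.toPEquiv_toMatrix_eq_sum_single]

theorem Equiv.toPEquiv_toMatrix_mul {ι α : Type*} [Fintype ι] [DecidableEq ι]
    [NonAssocSemiring α] (e f : ι ≃ ι) :
    (e.toPEquiv.toMatrix : Matrix ι ι α) * f.toPEquiv.toMatrix = (e.trans f).toPEquiv.toMatrix := by
  rw [← PEquiv.toMatrix_trans, Equiv.toPEquiv_trans]

theorem Equiv.toPEquiv_toMatrix_mul_symm {ι α : Type*} [Fintype ι] [DecidableEq ι]
    [NonAssocSemiring α] (e : ι ≃ ι) :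
    (e.toPEquiv.toMatrix : Matrix ι ι α) * e.symm.toPEquiv.toMatrix = 1 := by
  rw [Equiv.toPEquiv_toMatrix_mul, Equiv.self_trans_symm, Equiv.toPEquiv_refl,
    PEquiv.toMatrix_refl]

theorem Equiv.prodShear_twist_apply {X : Type*} (e : X → X ≃ X) (a b : X) :
    ((((Equiv.prodComm X X).trans (Equiv.prodShear (Equiv.refl X) e)).trans
      (Equiv.prodComm X X)).trans (Equiv.prodShear (Equiv.refl X) e).symm) (b, a) =
      (e a b, (e (e a b)).symm a) :=
  rfl

theorem mul_conj_mul_eq_one {M : Type*} [Monoid M] {p f g : M} (hp : p * p = 1)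
    (hfg : f * g = 1) (hgf : g * f = 1) :
    (p * f * p * g) * (p * (p * f * p * g) * p) = 1 := by
  have hp' (x : M) : p * (p * x) = x := by rw [← mul_assoc, hp, one_mul]
  have hfg' (x : M) : f * (g * x) = x := by rw [← mul_assoc, hfg, one_mul]
  have hgf' (x : M) : g * (f * x) = x := by rw [← mul_assoc, hgf, one_mul]
  simp only [mul_assoc, hp', hgf', hfg', hp]

theorem stmt14_general {X : Type*} [Fintype X] [DecidableEq X]
    (σ τ : X → X → X)
    (hbij : ∀ a, Function.Bijective (σ a))
    (hτ : ∀ a b, σ (σ a b) (τ b a) = a)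
    (F P R : Matrix (X × X) (X × X) ℂ)
    (hF : F = ∑ a : X, ∑ b : X,
      Matrix.single a a (1 : ℂ) ⊗ₖ Matrix.single b (σ a b) (1 : ℂ))
    (hP : P = ∑ a : X, ∑ b : X,
      Matrix.single a b (1 : ℂ) ⊗ₖ Matrix.single b a (1 : ℂ))
    (hR : R = (P * F * P) * F⁻¹) :
    R = (∑ a : X, ∑ b : X,
      Matrix.single b (σ a b) (1 : ℂ) ⊗ₖ Matrix.single a (τ b a) (1 : ℂ)) ∧
    R * (P * R * P) = 1 := by
  set s : X → X ≃ X := fun a => Equiv.ofBijective (σ a) (hbij a)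
  set shear := Equiv.prodShear (Equiv.refl X) s
  set swap := Equiv.prodComm X X
  have hF' : F = shear.toPEquiv.toMatrix := by
    rw [hF, Equiv.toPEquiv_toMatrix_eq_sum_kronecker]; rfl
  have hP' : P = swap.toPEquiv.toMatrix := by
    rw [hP, Equiv.toPEquiv_toMatrix_eq_sum_kronecker]; rfl
  have hFG : F * shear.symm.toPEquiv.toMatrix = 1 := hF' ▸ shear.toPEquiv_toMatrix_mul_symm
  have hGF : shear.symm.toPEquiv.toMatrix * F = 1 := hF' ▸ shear.symm.toPEquiv_toMatrix_mul_symm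
  have hPP : P * P = 1 := by
    have := swap.toPEquiv_toMatrix_mul_symm (α := ℂ)
    rwa [Equiv.prodComm_symm, ← hP'] at this
  have hFinv : F⁻¹ = shear.symm.toPEquiv.toMatrix := inv_eq_right_inv hFG
  have hτ' (a b : X) : (s (s a b)).symm a = τ b a := by
    rw [Equiv.symm_apply_eq]; exact (hτ a b).symm
  refine ⟨?_, hR ▸ hFinv ▸ mul_conj_mul_eq_one hPP hFG hGF⟩
  rw [hR, hFinv, hF', hP', Equiv.toPEquiv_toMatrix_mul, Equiv.toPEquiv_toMatrix_mul,
    Equiv.toPEquiv_toMatrix_mul, Equiv.toPEquiv_toMatrix_eq_sum_kronecker, Finset.sum_comm]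
  simp only [swap, shear, Equiv.prodShear_twist_apply, hτ']
  rfl

/-- with `F = Σ_{a,b} e_{a,a} ⊗ e_{b,σ_a(b)}`, `P` the flip and
`R := F^{op} F⁻¹ = (P F P) F⁻¹`, one has `R = Σ_{a,b} e_{b,σ_a(b)} ⊗ e_{a,τ_b(a)}` and
`R₁₂ R₂₁ = Id` where `R₂₁ = P R P`. -/
theorem stmt14 {X : Type*} [Fintype X] [DecidableEq X]
    (σ τ : X → X → X)
    (hbij : ∀ a, Function.Bijective (σ a))
    (hτ : ∀ a b, σ (σ a b) (τ b a) = a)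
    (hcompat : ∀ a b c, σ a (σ b c) = σ (σ a b) (σ (τ b a) c))
    (F P R : Matrix (X × X) (X × X) ℂ)
    (hF : F = ∑ a : X, ∑ b : X,
      Matrix.single a a (1 : ℂ) ⊗ₖ Matrix.single b (σ a b) (1 : ℂ))
    (hP : P = ∑ a : X, ∑ b : X,
      Matrix.single a b (1 : ℂ) ⊗ₖ Matrix.single b a (1 : ℂ))
    (hR : R = (P * F * P) * F⁻¹) :
    R = (∑ a : X, ∑ b : X,
      Matrix.single b (σ a b) (1 : ℂ) ⊗ₖ Matrix.single a (τ b a) (1 : ℂ)) ∧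
    R * (P * R * P) = 1 :=
  stmt14_general σ τ hbij hτ F P R hF hP hR
end

section
/- Let X be a finite set with bijections σ_a of X satisfying σ_{σ_a(b)}(σ_{τ_b(a)}(c)) = σ_a(σ_b(c)) where τ_b(a) = σ_{σ_a(b)}^{-1}(a). Define w_a := Σ_{b∈X} e_{σ_a(b),b} and h_a := e_{a,a} as n×n matrices (n=|X|). Then these matrices satisfy: h_a h_b = δ_{a,b} h_a, w_a is invertible, w_a w_b = w_{σ_a(b)} w_{τ_b(a)}, and w_a h_b = h_{σ_a(b)} w_a for all a, b ∈ X. -/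
/-!
`w_a` is the matrix of the map `e_b ↦ e_{σ_a b}`, and `f ↦ funMatrix f` turns composition into
matrix multiplication. So `w_a` is invertible because `σ_a` is, the relation
`w_a w_b = w_{σ_a b} w_{τ_b a}` is the compatibility identity
`σ_a ∘ σ_b = σ_{σ_a b} ∘ σ_{τ_b a}`, and `w_a e_{b,b} = e_{σ_a b, b} = e_{σ_a b, σ_a b} w_a`.
-/

open Matrix

section funMatrix

variable {X : Type*} [Fintype X] [DecidableEq X] (R : Type*) [Semiring R]

def funMatrix (f : X → X) : Matrix X X R := ∑ b, single (f b) b 1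

variable {R}

theorem funMatrix_apply (f : X → X) (i j : X) :
    funMatrix R f i j = if i = f j then 1 else 0 := by
  rw [funMatrix, Matrix.sum_apply,
    Finset.sum_eq_single j (fun b _ hb => single_apply_of_col_ne _ _ hb _) (by simp)]
  simp [single_apply, eq_comm]

theorem funMatrix_mul (f g : X → X) :
    funMatrix R f * funMatrix R g = funMatrix R (f ∘ g) := by
  ext i j
  simp [mul_apply, funMatrix_apply]

theorem funMatrix_id : funMatrix R (id : X → X) = 1 := by
  ext i j
  simp [funMatrix_apply, one_apply]

theorem isUnit_funMatrix {f : X → X} (hf : f.Bijective) : IsUnit (funMatrix R f) := by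
  let e := Equiv.ofBijective f hf
  refine ⟨⟨funMatrix R f, funMatrix R e.symm, ?_, ?_⟩, rfl⟩ <;>
    rw [funMatrix_mul, ← funMatrix_id] <;> congr 1 <;> ext x
  · exact e.apply_symm_apply x
  · exact e.symm_apply_apply x

theorem funMatrix_mul_single (f : X → X) (j k : X) (c : R) :
    funMatrix R f * single j k c = single (f j) k c := by
  ext a b
  by_cases hk : k = b <;> simp [mul_apply, funMatrix_apply, single_apply, hk, eq_comm]

theorem single_mul_funMatrix {f : X → X} (hf : f.Injective) (i j : X) (c : R) :
    single i (f j) c * funMatrix R f = single i j c := by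
  ext a b
  simp [mul_apply, funMatrix_apply, single_apply, hf.eq_iff]

end funMatrix

theorem stmt15_general {X : Type*} [Fintype X] [DecidableEq X]
    (σ τ : X → X → X)
    (hbij : ∀ a, Function.Bijective (σ a))
    (hcompat : ∀ a b c, σ (σ a b) (σ (τ b a) c) = σ a (σ b c))
    (w h : X → Matrix X X ℂ)
    (hw : ∀ a, w a = ∑ b : X, Matrix.single (σ a b) b (1 : ℂ))
    (hh : ∀ a, h a = Matrix.single a a (1 : ℂ)) :
    (∀ a b : X, h a * h b = if a = b then h a else 0) ∧
    (∀ a : X, IsUnit (w a)) ∧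
    (∀ a b : X, w a * w b = w (σ a b) * w (τ b a)) ∧
    (∀ a b : X, w a * h b = h (σ a b) * w a) := by
  replace hw : ∀ a, w a = funMatrix ℂ (σ a) := hw
  refine ⟨fun a b => ?_, fun a => ?_, fun a b => ?_, fun a b => ?_⟩
  · rw [hh, hh]
    split_ifs with hab
    · rw [hab, single_mul_single_same, mul_one]
    · exact single_mul_single_of_ne _ _ _ _ hab _
  · rw [hw]
    exact isUnit_funMatrix (hbij a)
  · simp only [hw, funMatrix_mul]
    congr 1
    funext c
    exact (hcompat a b c).symm
  · rw [hw, hh, hh, funMatrix_mul_single, single_mul_funMatrix (hbij a).1]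

/-- the matrices `w_a = Σ_b e_{σ_a(b),b}` and `h_a = e_{a,a}` give the
fundamental representation of the special set-theoretic Yang–Baxter algebra. -/
theorem stmt15 {X : Type*} [Fintype X] [DecidableEq X]
    (σ τ : X → X → X)
    (hbij : ∀ a, Function.Bijective (σ a))
    (hτ : ∀ a b, σ (σ a b) (τ b a) = a)
    (hcompat : ∀ a b c, σ (σ a b) (σ (τ b a) c) = σ a (σ b c))
    (w h : X → Matrix X X ℂ)
    (hw : ∀ a, w a = ∑ b : X, Matrix.single (σ a b) b (1 : ℂ))
    (hh : ∀ a, h a = Matrix.single a a (1 : ℂ)) :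
    (∀ a b : X, h a * h b = if a = b then h a else 0) ∧
    (∀ a : X, IsUnit (w a)) ∧
    (∀ a b : X, w a * w b = w (σ a b) * w (τ b a)) ∧
    (∀ a b : X, w a * h b = h (σ a b) * w a) :=
  stmt15_general σ τ hbij hcompat w h hw hh
end

section
/- Let A be a unital associative algebra, F, R ∈ A ⊗ A invertible with R satisfying the Yang–Baxter equation R₁₂R₁₃R₂₃ = R₂₃R₁₃R₁₂, and suppose there exist invertible F_{1,23}, F_{12,3} ∈ A⊗A⊗A satisfying the cocycle condition F₂₃ F_{1,23} = F₁₂ F_{12,3}, together with F_{1,32} R₂₃ = R₂₃ F_{1,23} and F_{21,3} R₁₂ = R₁₂ F_{12,3} (where F_{1,32} = π₂₃(F_{1,23}), F_{21,3} = π₁₂(F_{12,3}), π the relevant flip). Then R^F := F^{op} R F^{-1} also satisfies the Yang–Baxter equation. -/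
open Matrix

/-- The algebra of operators on a triple tensor product. -/
abbrev M3 (V : Type*) := Matrix (V × V × V) (V × V × V) ℂ

/-- Embedding of an operator on `V ⊗ V` into factors 1,2 of `V ⊗ V ⊗ V`. -/
def emb12 {V : Type*} [DecidableEq V] (A : Matrix (V × V) (V × V) ℂ) : M3 V :=
  fun p q => A (p.1, p.2.1) (q.1, q.2.1) * (if p.2.2 = q.2.2 then 1 else 0)

/-- Embedding into factors 1,3. -/
def emb13 {V : Type*} [DecidableEq V] (A : Matrix (V × V) (V × V) ℂ) : M3 V :=
  fun p q => A (p.1, p.2.2) (q.1, q.2.2) * (if p.2.1 = q.2.1 then 1 else 0)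

/-- Embedding into factors 2,3. -/
def emb23 {V : Type*} [DecidableEq V] (A : Matrix (V × V) (V × V) ℂ) : M3 V :=
  fun p q => A (p.2.1, p.2.2) (q.2.1, q.2.2) * (if p.1 = q.1 then 1 else 0)

/-- The flip `π` on operators on `V ⊗ V`, giving `A^{op}`. -/
def flip2 {V : Type*} (A : Matrix (V × V) (V × V) ℂ) : Matrix (V × V) (V × V) ℂ :=
  fun p q => A (p.2, p.1) (q.2, q.1)

/-- The flip `π₁₂` of the first two factors on operators on `V ⊗ V ⊗ V`. -/
def swap12 {V : Type*} (A : M3 V) : M3 V :=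
  fun p q => A (p.2.1, p.1, p.2.2) (q.2.1, q.1, q.2.2)

/-- The flip `π₂₃` of the last two factors on operators on `V ⊗ V ⊗ V`. -/
def swap23 {V : Type*} (A : M3 V) : M3 V :=
  fun p q => A (p.1, p.2.2, p.2.1) (q.1, q.2.2, q.2.1)

/-!
Put `Φ := F₁₂ F_{12,3} = F₂₃ F_{1,23}`. The admissibility conditions say exactly that
`R^F₁₂ Φ = π₁₂(Φ) R₁₂` and `R^F₂₃ Φ = π₂₃(Φ) R₂₃`; flipping these gives the analogous
intertwining relations for every factor of both sides of the Yang–Baxter equation, so that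
`R^F₁₂ R^F₁₃ R^F₂₃ Φ = π₂₃π₁₂π₂₃(Φ) R₁₂ R₁₃ R₂₃` and
`R^F₂₃ R^F₁₃ R^F₁₂ Φ = π₁₂π₂₃π₁₂(Φ) R₂₃ R₁₃ R₁₂`.
The braid relation `π₂₃π₁₂π₂₃ = π₁₂π₂₃π₁₂`, the Yang–Baxter equation for `R` and the
invertibility of `Φ` finish the proof.
-/

open Kronecker

theorem mul_mul_mul_mul_eq_map_mul {α : Type*} [Monoid α] (s : α → α) {f fi r n : α}
    (hs : s (f * n) = s f * s n) (hf : fi * f = 1) (hn : s n * r = r * n) :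
    s f * r * fi * (f * n) = s (f * n) * r :=
  calc s f * r * fi * (f * n) = s f * r * (fi * f) * n := by simp only [mul_assoc]
    _ = s f * (s n * r) := by rw [hf, mul_one, hn, mul_assoc]
    _ = s (f * n) * r := by rw [hs, mul_assoc]

theorem mul_mul_mul_mul_eq_of_mul_eq {α : Type*} [Monoid α] {a b c a' b' c' φ ψ₁ ψ₂ ψ₃ : α}
    (hc : c * φ = ψ₁ * c') (hb : b * ψ₁ = ψ₂ * b') (ha : a * ψ₂ = ψ₃ * a') :
    a * b * c * φ = ψ₃ * (a' * b' * c') :=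
  calc a * b * c * φ = a * (b * ψ₁) * c' := by rw [mul_assoc _ c, hc]; simp only [mul_assoc]
    _ = ψ₃ * (a' * b' * c') := by rw [hb, ← mul_assoc, ha]; simp only [mul_assoc]

section Embeddings

variable {V : Type*} [DecidableEq V]

theorem emb12_eq_submatrix_kronecker (A : Matrix (V × V) (V × V) ℂ) :
    emb12 A = (A ⊗ₖ (1 : Matrix V V ℂ)).submatrix (Equiv.prodAssoc V V V).symm
      (Equiv.prodAssoc V V V).symm := by
  ext p q
  simp [emb12, one_apply]

theorem emb23_eq_submatrix_kronecker (A : Matrix (V × V) (V × V) ℂ) :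
    emb23 A = (A ⊗ₖ (1 : Matrix V V ℂ)).submatrix (Equiv.prodComm V (V × V))
      (Equiv.prodComm V (V × V)) := by
  ext p q
  simp [emb23, one_apply]

theorem emb12_one : emb12 (1 : Matrix (V × V) (V × V) ℂ) = 1 := by
  rw [emb12_eq_submatrix_kronecker, one_kronecker_one, submatrix_one_equiv]

theorem emb23_one : emb23 (1 : Matrix (V × V) (V × V) ℂ) = 1 := by
  rw [emb23_eq_submatrix_kronecker, one_kronecker_one, submatrix_one_equiv]

variable [Fintype V]

theorem emb12_mul (A B : Matrix (V × V) (V × V) ℂ) : emb12 (A * B) = emb12 A * emb12 B := by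
  simp only [emb12_eq_submatrix_kronecker, submatrix_mul_equiv, ← mul_kronecker_mul, mul_one]

theorem emb23_mul (A B : Matrix (V × V) (V × V) ℂ) : emb23 (A * B) = emb23 A * emb23 B := by
  simp only [emb23_eq_submatrix_kronecker, submatrix_mul_equiv, ← mul_kronecker_mul, mul_one]

end Embeddings

section Swaps

variable {V : Type*}

theorem swap12_mul [Fintype V] (A B : M3 V) : swap12 (A * B) = swap12 A * swap12 B :=
  let σ := Function.Involutive.toPerm (fun p : V × V × V => (p.2.1, p.1, p.2.2)) fun _ => rfl
  (submatrix_mul_equiv A B σ σ σ).symm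

theorem swap23_mul [Fintype V] (A B : M3 V) : swap23 (A * B) = swap23 A * swap23 B :=
  let σ := Function.Involutive.toPerm (fun p : V × V × V => (p.1, p.2.2, p.2.1)) fun _ => rfl
  (submatrix_mul_equiv A B σ σ σ).symm

theorem swap12_swap23_swap12 (A : M3 V) :
    swap12 (swap23 (swap12 A)) = swap23 (swap12 (swap23 A)) := rfl

theorem swap12_emb12 [DecidableEq V] (A : Matrix (V × V) (V × V) ℂ) :
    swap12 (emb12 A) = emb12 (flip2 A) := rfl

theorem swap23_emb23 [DecidableEq V] (A : Matrix (V × V) (V × V) ℂ) :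
    swap23 (emb23 A) = emb23 (flip2 A) := rfl

theorem swap23_emb12 [DecidableEq V] (A : Matrix (V × V) (V × V) ℂ) :
    swap23 (emb12 A) = emb13 A := rfl

theorem swap23_emb13 [DecidableEq V] (A : Matrix (V × V) (V × V) ℂ) :
    swap23 (emb13 A) = emb12 A := rfl

theorem swap12_emb13 [DecidableEq V] (A : Matrix (V × V) (V × V) ℂ) :
    swap12 (emb13 A) = emb23 A := rfl

theorem swap12_emb23 [DecidableEq V] (A : Matrix (V × V) (V × V) ℂ) :
    swap12 (emb23 A) = emb13 A := rfl

end Swaps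

section Twist

variable {V : Type*} [Fintype V] [DecidableEq V] {F Fi R : Matrix (V × V) (V × V) ℂ}

theorem emb12_twist_mul {N : M3 V} (hF : Fi * F = 1) (hN : swap12 N * emb12 R = emb12 R * N) :
    emb12 (flip2 F * R * Fi) * (emb12 F * N) = swap12 (emb12 F * N) * emb12 R := by
  rw [emb12_mul, emb12_mul, ← swap12_emb12]
  exact mul_mul_mul_mul_eq_map_mul swap12 (swap12_mul _ _)
    (by rw [← emb12_mul, hF, emb12_one]) hN

theorem emb23_twist_mul {M : M3 V} (hF : Fi * F = 1) (hM : swap23 M * emb23 R = emb23 R * M) :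
    emb23 (flip2 F * R * Fi) * (emb23 F * M) = swap23 (emb23 F * M) * emb23 R := by
  rw [emb23_mul, emb23_mul, ← swap23_emb23]
  exact mul_mul_mul_mul_eq_map_mul swap23 (swap23_mul _ _)
    (by rw [← emb23_mul, hF, emb23_one]) hM

end Twist

section Intertwine

variable {V : Type*} [Fintype V] [DecidableEq V] {X R : Matrix (V × V) (V × V) ℂ} {Φ : M3 V}

theorem emb12_emb13_emb23_mul_eq (h12 : emb12 X * Φ = swap12 Φ * emb12 R)
    (h23 : emb23 X * Φ = swap23 Φ * emb23 R) :
    emb12 X * emb13 X * emb23 X * Φ =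
      swap23 (swap12 (swap23 Φ)) * (emb12 R * emb13 R * emb23 R) := by
  have h13 := congrArg swap23 h12
  have h12' := congrArg (swap23 ∘ swap12) h23
  simp only [Function.comp_apply, swap12_mul, swap23_mul, swap23_emb12, swap12_emb23,
    swap23_emb13] at h13 h12'
  exact mul_mul_mul_mul_eq_of_mul_eq h23 h13 h12'

theorem emb23_emb13_emb12_mul_eq (h12 : emb12 X * Φ = swap12 Φ * emb12 R)
    (h23 : emb23 X * Φ = swap23 Φ * emb23 R) :
    emb23 X * emb13 X * emb12 X * Φ =
      swap12 (swap23 (swap12 Φ)) * (emb23 R * emb13 R * emb12 R) := by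
  have h13 := congrArg swap12 h23
  have h23' := congrArg (swap12 ∘ swap23) h12
  simp only [Function.comp_apply, swap12_mul, swap23_mul, swap12_emb23, swap23_emb12,
    swap12_emb13] at h13 h23'
  exact mul_mul_mul_mul_eq_of_mul_eq h12 h13 h23'

end Intertwine

theorem stmt16_general {V : Type*} [Fintype V] [DecidableEq V]
    (F Fi R : Matrix (V × V) (V × V) ℂ)
    (hF : F * Fi = 1) (hF' : Fi * F = 1)
    (hYBE : emb12 R * emb13 R * emb23 R = emb23 R * emb13 R * emb12 R)
    (M N : M3 V) (hN : IsUnit N)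
    (cocycle : emb23 F * M = emb12 F * N)
    (h2a : swap23 M * emb23 R = emb23 R * M)
    (h2b : swap12 N * emb12 R = emb12 R * N)
    (RF : Matrix (V × V) (V × V) ℂ) (hRF : RF = flip2 F * R * Fi) :
    emb12 RF * emb13 RF * emb23 RF = emb23 RF * emb13 RF * emb12 RF := by
  subst hRF
  have hF₁₂ : IsUnit (emb12 F) := ⟨⟨emb12 F, emb12 Fi, by rw [← emb12_mul, hF, emb12_one],
    by rw [← emb12_mul, hF', emb12_one]⟩, rfl⟩
  have h12 := emb12_twist_mul hF' h2b
  have h23 := emb23_twist_mul hF' h2a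
  rw [cocycle] at h23
  apply (hF₁₂.mul hN).mul_left_injective
  dsimp only
  rw [emb12_emb13_emb23_mul_eq h12 h23, emb23_emb13_emb12_mul_eq h12 h23, hYBE,
    swap12_swap23_swap12]

/-- Drinfel'd's admissible twist theorem, formalized for matrix algebras:
if `R` satisfies the YBE, `F` is invertible with inverse `Fi`, and there are invertible
`M = F_{1,23}`, `N = F_{12,3}` with `F₂₃ F_{1,23} = F₁₂ F_{12,3}`,
`F_{1,32} R₂₃ = R₂₃ F_{1,23}` and `F_{21,3} R₁₂ = R₁₂ F_{12,3}`, then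
`R^F := F^{op} R F⁻¹` also satisfies the YBE. -/
theorem stmt16 {V : Type*} [Fintype V] [DecidableEq V]
    (F Fi R : Matrix (V × V) (V × V) ℂ)
    (hF : F * Fi = 1) (hF' : Fi * F = 1) (hR : IsUnit R)
    (hYBE : emb12 R * emb13 R * emb23 R = emb23 R * emb13 R * emb12 R)
    (M N : M3 V) (hM : IsUnit M) (hN : IsUnit N)
    (cocycle : emb23 F * M = emb12 F * N)
    (h2a : swap23 M * emb23 R = emb23 R * M)
    (h2b : swap12 N * emb12 R = emb12 R * N)
    (RF : Matrix (V × V) (V × V) ℂ) (hRF : RF = flip2 F * R * Fi) :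
    emb12 RF * emb13 RF * emb23 RF = emb23 RF * emb13 RF * emb12 RF :=
  stmt16_general F Fi R hF hF' hYBE M N hN cocycle h2a h2b RF hRF
end

section
/- Let (X,+,∘) be a left brace with (X,+) abelian, σ_a(b) := -a + a∘b. Suppose n×n matrices w_a, h_a (a ∈ X, n = |X|) satisfy w_a h_b = h_{σ_a(b)} w_a, h_a h_b = δ_{a,b} h_a, Σ_a h_a = I, and w_a w_b = w_{a∘b}. Define F := Σ_a h_a ⊗ w_a^{-1}, R^F := F^{op} F^{-1}, F_{12,3} := Σ_{a,b} h_a ⊗ h_{σ_a(b)} ⊗ (w_b w_a)^{-1}. Then F_{12,3} = F_{21,3}, i.e. Σ_{a,b} h_a ⊗ h_{σ_a(b)} ⊗ w_{a∘b}^{-1} = Σ_{a,b} h_{σ_a(b)} ⊗ h_a ⊗ w_{a∘b}^{-1} after reindexing by â = σ_a(b), b̂ = τ_b(a). -/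
namespace LeftBrace

variable {X : Type*} [LeftBrace X]

theorem sig_sigInv (a x : X) : sig a (sigInv a x) = x := by
  simp [sig, sigInv]

theorem sigInv_sig (a x : X) : sigInv a (sig a x) = x := by
  simp [sig, sigInv]

theorem sig_sig_tau (a b : X) : sig (sig a b) (tau b a) = a :=
  sig_sigInv _ _

theorem tau_tau_sig (a b : X) : tau (tau b a) (sig a b) = b := by
  rw [tau, sig_sig_tau, sigInv_sig]

theorem sig_mul_tau (a b : X) : sig a b * tau b a = a * b := by
  rw [tau, sigInv, mul_inv_cancel_left, sig]
  abel

def sigTau : Equiv.Perm (X × X) :=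
  Function.Involutive.toPerm (fun p => (sig p.1 p.2, tau p.2 p.1)) fun p => by
    simp only [sig_sig_tau, tau_tau_sig]

theorem sum_sig_tau [Fintype X] {M : Type*} [AddCommMonoid M] (F : X → X → M) :
    ∑ a, ∑ b, F (sig a b) (tau b a) = ∑ a, ∑ b, F a b := by
  rw [← Fintype.sum_prod_type', ← Fintype.sum_prod_type']
  exact Equiv.sum_comp sigTau fun p => F p.1 p.2

end LeftBrace

open Matrix Kronecker

theorem stmt17_general {X : Type*} [LeftBrace X] [Fintype X] [DecidableEq X]
    (w h : X → Matrix X X ℂ) :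
    ∑ a : X, ∑ b : X, (h a ⊗ₖ h (sig a b)) ⊗ₖ (w (a * b))⁻¹
      = ∑ a : X, ∑ b : X, (h (sig a b) ⊗ₖ h a) ⊗ₖ (w (a * b))⁻¹ := by
  rw [← LeftBrace.sum_sig_tau]
  simp only [LeftBrace.sig_sig_tau, LeftBrace.sig_mul_tau]

/-- for a left brace and matrices `w_a, h_a` satisfying the special
set-theoretic YB algebra relations with `w_a w_b = w_{a∘b}`, one has `F_{12,3} = F_{21,3}`:
`Σ_{a,b} h_a ⊗ h_{σ_a(b)} ⊗ w_{a∘b}⁻¹ = Σ_{a,b} h_{σ_a(b)} ⊗ h_a ⊗ w_{a∘b}⁻¹`. -/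
theorem stmt17 {X : Type*} [LeftBrace X] [Fintype X] [DecidableEq X]
    (w h : X → Matrix X X ℂ)
    (hwh : ∀ a b : X, w a * h b = h (sig a b) * w a)
    (hhh : ∀ a b : X, h a * h b = if a = b then h a else 0)
    (hsum : ∑ a : X, h a = 1)
    (hww : ∀ a b : X, w a * w b = w (a * b)) :
    ∑ a : X, ∑ b : X, (h a ⊗ₖ h (sig a b)) ⊗ₖ (w (a * b))⁻¹
      = ∑ a : X, ∑ b : X, (h (sig a b) ⊗ₖ h a) ⊗ₖ (w (a * b))⁻¹ :=
  stmt17_general w h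
end

section
/- Let (X, +, 0) be a group and for each a ∈ X let σ_a : X → X be an additive bijection with σ_a(b+c) = σ_a(b)+σ_a(c). Suppose left cancellation: if σ_a(b) = σ_a(c) then b = c (automatic from bijectivity), and define a∘b := a+σ_a(b). If ∘ is associative, then the map a ↦ σ_a is a group homomorphism from (X,∘) to the group of additive automorphisms of (X,+), i.e. σ_{a∘b} = σ_a ∘ σ_b (composition) and σ_0 = id. -/
/-!
Expanding both sides of `(a ∘ b) ∘ c = a ∘ (b ∘ c)` with additivity of `σ_a` gives
`(a + σ_a b) + σ_{a∘b} c = (a + σ_a b) + σ_a (σ_b c)`, so associativity is exactly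
`σ_{a∘b} = σ_a ∘ σ_b`. Since `σ_0 0 = 0`, we get `0 ∘ 0 = 0`, hence `σ_0 ∘ σ_0 = σ_0`,
and an injective idempotent map is the identity.
-/

theorem Function.Injective.eq_id_of_comp_self {α : Type*} {f : α → α}
    (hf : Function.Injective f) (h : f ∘ f = f) : f = id :=
  funext fun x => hf (congrFun h x)

section circ

variable {X : Type*} [AddGroup X] {σ : X → X → X}

theorem circ_assoc_iff (hadd : ∀ x a b : X, σ x (a + b) = σ x a + σ x b) (a b c : X) :
    circ σ (circ σ a b) c = circ σ a (circ σ b c) ↔ σ (circ σ a b) c = σ a (σ b c) := by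
  simp only [circ, hadd, ← add_assoc, add_right_inj]

theorem circ_zero_zero (hadd : ∀ x a b : X, σ x (a + b) = σ x a + σ x b) :
    circ σ 0 0 = 0 := by
  rw [circ, zero_add]
  exact (AddMonoidHom.mk' (σ 0) (hadd 0)).map_zero

end circ

theorem stmt19_general {X : Type*} [AddGroup X] (σ : X → X → X)
    (hadd : ∀ x a b : X, σ x (a + b) = σ x a + σ x b)
    (hcancel : ∀ a b c : X, σ a b = σ a c → b = c)
    (hassoc : ∀ a b c : X, circ σ (circ σ a b) c = circ σ a (circ σ b c)) :
    (∀ a b : X, σ (circ σ a b) = σ a ∘ σ b) ∧ σ (0 : X) = id := by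
  have hcomp : ∀ a b : X, σ (circ σ a b) = σ a ∘ σ b := fun a b =>
    funext fun c => (circ_assoc_iff hadd a b c).mp (hassoc a b c)
  have hinj : Function.Injective (σ 0) := hcancel 0
  refine ⟨hcomp, hinj.eq_id_of_comp_self ?_⟩
  rw [← hcomp, circ_zero_zero hadd]

/-- if `∘` is associative then `a ↦ σ_a` is a group homomorphism from
`(X,∘)` to the additive automorphisms of `(X,+)`: `σ_{a∘b} = σ_a ∘ σ_b` and `σ_0 = id`. -/
theorem stmt19 {X : Type*} [AddGroup X] (σ : X → X → X)
    (hbij : ∀ a, Function.Bijective (σ a))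
    (hadd : ∀ x a b : X, σ x (a + b) = σ x a + σ x b)
    (hcancel : ∀ a b c : X, σ a b = σ a c → b = c)
    (hassoc : ∀ a b c : X, circ σ (circ σ a b) c = circ σ a (circ σ b c)) :
    (∀ a b : X, σ (circ σ a b) = σ a ∘ σ b) ∧ σ (0 : X) = id :=
  stmt19_general σ hadd hcancel hassoc
end
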